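/- arXiv:1910.06032 — 6 statements merged into one kernel-verified Lean document; each statement's English description precedes it below -/
import Mathlib

section
/- Theorem 3 (new characterization of negative closed walks). Let G be a simple graph. A set 𝒲 of closed walks in G is the set of negative closed walks of the signed graph (G, σ) for some choice of signature σ if and only if 𝒲 is closed under rotation and satisfies the exclusive 3-walk property. -/
set_option maxHeartbeats 1000000

open SimpleGraph

/- A walk is *negative* w.r.t. a signature `σ : Sym2 V → Bool` if the number of its
edges (with multiplicity) carrying sign `false` is odd. -/
def Walk.IsNegative {V : Type*} {G : SimpleGraph V} (σ : Sym2 V → Bool)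
    {u v : V} (W : G.Walk u v) : Prop :=
  Odd (W.edges.countP fun e => !σ e)

/- The family of negative closed walks of the signed graph `(G, σ)`. -/
def negClosedWalks {V : Type*} (G : SimpleGraph V) (σ : Sym2 V → Bool) :
    ∀ v : V, Set (G.Walk v v) :=
  fun _ => {W | Walk.IsNegative σ W}

/- `𝒲` satisfies the *exclusive 3-walk property*: for every two vertices `x, y` and
every three `x–y` walks `W₁, W₂, W₃`, an even number of the three closed walks
`W₁W₂⁻¹`, `W₁W₃⁻¹`, `W₂W₃⁻¹` belongs to `𝒲`. -/
open scoped Classical in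
def Exclusive3WalkProperty {V : Type*} {G : SimpleGraph V}
    (𝒲 : ∀ v : V, Set (G.Walk v v)) : Prop :=
  ∀ (x y : V) (W₁ W₂ W₃ : G.Walk x y),
    Even ((if W₁.append W₂.reverse ∈ 𝒲 x then 1 else 0) +
          (if W₁.append W₃.reverse ∈ 𝒲 x then 1 else 0) +
          (if W₂.append W₃.reverse ∈ 𝒲 x then 1 else 0) : ℕ)

/- `𝒲` is *closed under rotation*: for every closed walk `W ∈ 𝒲` at `v` and every
vertex `u` in the support of `W`, the rotation of `W` starting at `u` is in `𝒲`. -/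
def ClosedUnderRotation {V : Type*} [DecidableEq V] {G : SimpleGraph V}
    (𝒲 : ∀ v : V, Set (G.Walk v v)) : Prop :=
  ∀ (v : V) (W : G.Walk v v), W ∈ 𝒲 v →
    ∀ (u : V) (h : u ∈ W.support), W.rotate u h ∈ 𝒲 u

namespace NegAux

open SimpleGraph.Walk
open scoped Classical

variable {V : Type*} {G : SimpleGraph V} {𝒲 : ∀ v : V, Set (G.Walk v v)}

lemma parity3 (p q r : Prop) [Decidable p] [Decidable q] [Decidable r] :
    Even ((if p then 1 else 0) + (if q then 1 else 0) + (if r then 1 else 0) : ℕ) ↔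
      (p ↔ (q ↔ ¬ r)) := by
  by_cases hp : p <;> by_cases hq : q <;> by_cases hr : r <;>
    simp [hp, hq, hr, Nat.even_iff]

lemma key (hE : Exclusive3WalkProperty 𝒲) {x y : V} (W₁ W₂ W₃ : G.Walk x y) :
    W₁.append W₂.reverse ∈ 𝒲 x ↔
      (W₁.append W₃.reverse ∈ 𝒲 x ↔ W₂.append W₃.reverse ∉ 𝒲 x) :=
  (parity3 _ _ _).mp (hE x y W₁ W₂ W₃)

lemma self_not (hE : Exclusive3WalkProperty 𝒲) {x y : V} (W : G.Walk x y) :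
    W.append W.reverse ∉ 𝒲 x := by
  have := key hE W W W; tauto

lemma nil_not (hE : Exclusive3WalkProperty 𝒲) (x : V) : (nil : G.Walk x x) ∉ 𝒲 x := by
  have := self_not hE (nil : G.Walk x x); simpa using this

lemma rev_mem (hE : Exclusive3WalkProperty 𝒲) {x : V} (Z : G.Walk x x) :
    Z.reverse ∈ 𝒲 x ↔ Z ∈ 𝒲 x := by
  have h := key hE (nil : G.Walk x x) Z nil
  simp only [nil_append, reverse_nil, append_nil] at h
  have := nil_not hE x
  tauto

lemma addc (hE : Exclusive3WalkProperty 𝒲) {x : V} (A B : G.Walk x x) :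
    A.append B ∈ 𝒲 x ↔ ¬(A ∈ 𝒲 x ↔ B ∈ 𝒲 x) := by
  have h := key hE A B.reverse (nil : G.Walk x x)
  simp only [reverse_reverse, reverse_nil, append_nil] at h
  have h2 := rev_mem hE B
  tauto


variable [DecidableEq V]

lemma rotate_cons_eq {a b : V} (h : G.Adj a b) (Q : G.Walk b a)
    (hb : b ∈ (Walk.cons h Q).support) :
    (Walk.cons h Q).rotate b hb = Q.append (Walk.cons h Walk.nil) := by
  cases Q with
  | nil => exact absurd rfl h.ne
  | cons r Q' =>
    simp only [Walk.rotate, Walk.takeUntil, Walk.dropUntil]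
    simp [h.ne]


lemma se (hE : Exclusive3WalkProperty 𝒲) (hR : ClosedUnderRotation 𝒲)
    {a b : V} (h : G.Adj a b) (K : G.Walk b b) :
    Walk.cons h (K.append (Walk.cons h.symm Walk.nil)) ∈ 𝒲 a ↔ K ∈ 𝒲 b := by
  have hEE : (Walk.cons h.symm (Walk.cons h Walk.nil) : G.Walk b b) ∉ 𝒲 b := by
    have := self_not hE (Walk.cons h.symm Walk.nil : G.Walk b a)
    simpa using this
  constructor
  · intro hw
    have hb : b ∈ (Walk.cons h (K.append (Walk.cons h.symm Walk.nil))).support := by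
      simp [Walk.support_cons]
    have hrot := hR a _ hw b hb
    rw [rotate_cons_eq h _ hb] at hrot
    rw [← Walk.append_assoc] at hrot
    have := addc hE K (Walk.cons h.symm (Walk.cons h Walk.nil))
    simp only [Walk.cons_append, Walk.nil_append] at this hrot
    tauto
  · intro hk
    have hmem : (Walk.cons h.symm (Walk.cons h K) : G.Walk b b) ∈ 𝒲 b := by
      have e1 : (Walk.cons h.symm (Walk.cons h K) : G.Walk b b)
          = (Walk.cons h.symm (Walk.cons h Walk.nil) : G.Walk b b).append K := by
        simp [Walk.cons_append]
      rw [e1, addc hE]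
      tauto
    have ha : a ∈ (Walk.cons h.symm (Walk.cons h K)).support := by
      simp [Walk.support_cons]
    have hrot := hR b _ hmem a ha
    rw [rotate_cons_eq h.symm _ ha] at hrot
    simpa [Walk.cons_append] using hrot

lemma conj (hE : Exclusive3WalkProperty 𝒲) (hR : ClosedUnderRotation 𝒲)
    {a u : V} (X : G.Walk a u) : ∀ Z : G.Walk u u,
    X.append (Z.append X.reverse) ∈ 𝒲 a ↔ Z ∈ 𝒲 u := by
  induction X with
  | nil => intro Z; simpa using Iff.rfl
  | @cons a c u h X' ih =>
    intro Z
    have e1 : (Walk.cons h X').append (Z.append (Walk.cons h X').reverse)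
        = Walk.cons h ((X'.append (Z.append X'.reverse)).append (Walk.cons h.symm Walk.nil)) := by
      simp [Walk.reverse_cons, Walk.cons_append, Walk.append_assoc]
    rw [e1, se hE hR h _, ih]

lemma cyc (hE : Exclusive3WalkProperty 𝒲) (hR : ClosedUnderRotation 𝒲)
    {a u : V} (X : G.Walk a u) (C : G.Walk u a) :
    X.append C ∈ 𝒲 a ↔ C.append X ∈ 𝒲 u := by
  have h1 := conj hE hR X (C.append X)
  have e : X.append ((C.append X).append X.reverse)
      = (X.append C).append (X.append X.reverse) := by
    simp [Walk.append_assoc]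
  rw [e] at h1
  have h2 := addc hE (X.append C) (X.append X.reverse)
  have h3 := self_not hE X
  tauto

lemma ai (hE : Exclusive3WalkProperty 𝒲) (hR : ClosedUnderRotation 𝒲)
    {a x y : V} (A : G.Walk a x) (B : G.Walk a y) (W W' : G.Walk x y) :
    A.append (W.append B.reverse) ∈ 𝒲 a ↔
      (W.append W'.reverse ∈ 𝒲 x ↔ A.append (W'.append B.reverse) ∉ 𝒲 a) := by
  have h := key hE (A.append W) B (A.append W')
  have e1 : (A.append W).append B.reverse = A.append (W.append B.reverse) := by
    simp [Walk.append_assoc]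
  have e2 : (A.append W).append (A.append W').reverse
      = A.append ((W.append W'.reverse).append A.reverse) := by
    simp [Walk.reverse_append, Walk.append_assoc]
  have e3 : B.append (A.append W').reverse
      = (A.append (W'.append B.reverse)).reverse := by
    simp [Walk.reverse_append, Walk.append_assoc]
  rw [e1, e2, e3, conj hE hR A (W.append W'.reverse), rev_mem hE] at h
  exact h


/-! ### Root and canonical walks -/

variable (G) in
noncomputable def rt (x : V) : V := Quot.out (G.connectedComponentMk x)

variable (G) in
noncomputable def pw (x : V) : G.Walk (rt G x) x :=
  (SimpleGraph.ConnectedComponent.exact (Quot.out_eq (G.connectedComponentMk x))).some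

variable (G) in
lemma root_eq {x y : V} (W : G.Walk x y) : rt G x = rt G y :=
  congrArg Quot.out (SimpleGraph.ConnectedComponent.sound W.reachable)

lemma memT {c b : V} (e : c = b) {w x : V} (Pw : G.Walk c w) (Px : G.Walk c x)
    (M : G.Walk w x) :
    (Pw.copy e rfl).append (M.append (Px.copy e rfl).reverse) ∈ 𝒲 b ↔
      Pw.append (M.append Px.reverse) ∈ 𝒲 c := by
  subst e; rw [Walk.copy_rfl_rfl, Walk.copy_rfl_rfl]

lemma edge_symm_gen (hE : Exclusive3WalkProperty 𝒲) {u v b : V} (h : G.Adj u v)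
    (Pu : G.Walk b u) (Pv : G.Walk b v) :
    Pu.append ((Walk.cons h Walk.nil).append Pv.reverse) ∈ 𝒲 b ↔
      Pv.append ((Walk.cons h.symm Walk.nil).append Pu.reverse) ∈ 𝒲 b := by
  rw [← rev_mem hE]
  have e : (Pu.append ((Walk.cons h Walk.nil).append Pv.reverse)).reverse
      = Pv.append ((Walk.cons h.symm Walk.nil).append Pu.reverse) := by
    simp only [Walk.reverse_append, Walk.reverse_cons, Walk.reverse_nil,
      Walk.nil_append, Walk.reverse_reverse]
    rw [← Walk.append_assoc, Walk.cons_append, Walk.nil_append]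
  rw [e]

variable (G 𝒲) in
noncomputable def sigmaFun (u v : V) : Bool :=
  if h : G.Adj u v then
    (if (pw G u).append ((Walk.cons h Walk.nil).append
        (((pw G v).copy (root_eq G (Walk.cons h Walk.nil)).symm rfl).reverse)) ∈ 𝒲 (rt G u)
     then false else true)
  else true

lemma sigmaFun_symm (hE : Exclusive3WalkProperty 𝒲) (u v : V) :
    sigmaFun G 𝒲 u v = sigmaFun G 𝒲 v u := by
  by_cases h : G.Adj u v
  · have h' : G.Adj v u := h.symm
    have e1 : rt G v = rt G u := (root_eq G (Walk.cons h Walk.nil)).symm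
    have e2 : rt G u = rt G v := e1.symm
    have key : (pw G u).append ((Walk.cons h Walk.nil).append
          (((pw G v).copy e1 rfl).reverse)) ∈ 𝒲 (rt G u) ↔
        (pw G v).append ((Walk.cons h' Walk.nil).append
          (((pw G u).copy e2 rfl).reverse)) ∈ 𝒲 (rt G v) := by
      rw [edge_symm_gen hE h (pw G u) ((pw G v).copy e1 rfl)]
      have ecp : ((pw G u).copy e2 rfl).copy e1 rfl = pw G u := by
        rw [Walk.copy_copy]; exact Walk.copy_rfl_rfl _
      rw [show (pw G u).reverse = (((pw G u).copy e2 rfl).copy e1 rfl).reverse by rw [ecp]]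
      exact memT e1 (pw G v) ((pw G u).copy e2 rfl) (Walk.cons h.symm Walk.nil)
    simp only [sigmaFun, dif_pos h, dif_pos h']
    by_cases hm : (pw G u).append ((Walk.cons h Walk.nil).append
        (((pw G v).copy e1 rfl).reverse)) ∈ 𝒲 (rt G u)
    · rw [if_pos hm, if_pos (key.mp hm)]
    · rw [if_neg hm, if_neg (fun k => hm (key.mpr k))]
  · have h' : ¬ G.Adj v u := fun k => h k.symm
    simp [sigmaFun, h, h']

variable (G 𝒲) in
noncomputable def sigma (hE : Exclusive3WalkProperty 𝒲) : Sym2 V → Bool :=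
  Sym2.lift ⟨sigmaFun G 𝒲, sigmaFun_symm hE⟩

lemma sigma_spec (hE : Exclusive3WalkProperty 𝒲) {u v : V} (h : G.Adj u v)
    (e : rt G v = rt G u) :
    (sigma G 𝒲 hE s(u, v) = false) ↔
      (pw G u).append ((Walk.cons h Walk.nil).append
        (((pw G v).copy e rfl).reverse)) ∈ 𝒲 (rt G u) := by
  rw [sigma, Sym2.lift_mk]
  simp only [sigmaFun, dif_pos h]
  by_cases hm : (pw G u).append ((Walk.cons h Walk.nil).append
      (((pw G v).copy e rfl).reverse)) ∈ 𝒲 (rt G u)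
  · rw [if_pos hm]; simpa using hm
  · rw [if_neg hm]; simpa using hm


lemma main (hE : Exclusive3WalkProperty 𝒲) (hR : ClosedUnderRotation 𝒲) :
    ∀ {u x : V} (W : G.Walk u x) (e : rt G x = rt G u),
      (pw G u).append (W.append (((pw G x).copy e rfl).reverse)) ∈ 𝒲 (rt G u) ↔
        Odd (List.countP (fun ed => !(sigma G 𝒲 hE ed)) W.edges) := by
  intro u x W
  induction W with
  | @nil u =>
    intro e
    rw [show (pw G u).copy e rfl = pw G u from Walk.copy_rfl_rfl _]
    simp only [Walk.nil_append, Walk.edges_nil, List.countP_nil]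
    exact iff_of_false (self_not hE (pw G u)) (by simp [Nat.odd_iff])
  | @cons u w x h W₂ ih =>
    intro e
    have ewu : rt G w = rt G u := (root_eq G (Walk.cons h Walk.nil)).symm
    have exw : rt G x = rt G w := e.trans ewu.symm
    have hai := ai hE hR (pw G u) ((pw G x).copy e rfl) (Walk.cons h W₂)
      ((Walk.cons h Walk.nil).append
        ((((pw G w).copy ewu rfl).reverse).append ((pw G x).copy e rfl)))
    -- T1 analysis
    have eq1 : (Walk.cons h W₂).append ((Walk.cons h Walk.nil).append
          ((((pw G w).copy ewu rfl).reverse).append ((pw G x).copy e rfl))).reverse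
        = (Walk.cons h Walk.nil).append
            ((W₂.append ((((pw G x).copy e rfl).reverse).append ((pw G w).copy ewu rfl))).append
              (Walk.cons h Walk.nil).reverse) := by
      simp only [Walk.reverse_append, Walk.reverse_cons, Walk.reverse_nil, Walk.reverse_reverse,
        Walk.cons_append, Walk.nil_append, Walk.append_assoc]
    have hcyc := cyc hE hR ((pw G w).copy ewu rfl)
      (W₂.append (((pw G x).copy e rfl).reverse))
    have ecopy : ((pw G x).copy exw rfl).copy ewu rfl = (pw G x).copy e rfl := by
      rw [Walk.copy_copy]
    have hmemT := memT (𝒲 := 𝒲) ewu (pw G w) ((pw G x).copy exw rfl) W₂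
    rw [ecopy] at hmemT
    have hT1 : (Walk.cons h W₂).append ((Walk.cons h Walk.nil).append
          ((((pw G w).copy ewu rfl).reverse).append ((pw G x).copy e rfl))).reverse ∈ 𝒲 u ↔
        Odd (List.countP (fun ed => !(sigma G 𝒲 hE ed)) W₂.edges) := by
      rw [eq1, conj hE hR (Walk.cons h Walk.nil)
        (W₂.append ((((pw G x).copy e rfl).reverse).append ((pw G w).copy ewu rfl)))]
      rw [show W₂.append ((((pw G x).copy e rfl).reverse).append ((pw G w).copy ewu rfl))
          = (W₂.append (((pw G x).copy e rfl).reverse)).append ((pw G w).copy ewu rfl)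
          from Walk.append_assoc _ _ _]
      rw [← hcyc, hmemT]
      exact ih exw
    -- T2 analysis
    have eq2 : (pw G u).append (((Walk.cons h Walk.nil).append
          ((((pw G w).copy ewu rfl).reverse).append ((pw G x).copy e rfl))).append
            (((pw G x).copy e rfl)).reverse)
        = ((pw G u).append ((Walk.cons h Walk.nil).append
            (((pw G w).copy ewu rfl).reverse))).append
          (((pw G x).copy e rfl).append (((pw G x).copy e rfl)).reverse) := by
      simp only [Walk.cons_append, Walk.nil_append, ← Walk.append_assoc]
    have hT2 : (pw G u).append (((Walk.cons h Walk.nil).append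
          ((((pw G w).copy ewu rfl).reverse).append ((pw G x).copy e rfl))).append
            (((pw G x).copy e rfl)).reverse) ∈ 𝒲 (rt G u) ↔
        (sigma G 𝒲 hE s(u, w) = false) := by
      rw [eq2, addc hE, sigma_spec hE h ewu]
      have := self_not hE ((pw G x).copy e rfl)
      tauto
    rw [hT1, hT2] at hai
    rw [hai]
    rw [Walk.edges_cons, List.countP_cons]
    by_cases hs : sigma G 𝒲 hE s(u, w) = false
    · rw [if_pos (by rw [hs]; rfl)]
      rw [Nat.odd_add_one]
      tauto
    · rw [if_neg (fun hcond => hs (by simpa using hcond)), Nat.add_zero]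
      tauto

end NegAux


/-- Theorem 3: `𝒲` is the set of negative closed walks of `(G, σ)` for some signature `σ`
iff `𝒲` is closed under rotation and satisfies the exclusive 3-walk property. -/
theorem negClosedWalks_characterization {V : Type*} [DecidableEq V] (G : SimpleGraph V)
    (𝒲 : ∀ v : V, Set (G.Walk v v)) :
    (∃ σ : Sym2 V → Bool, 𝒲 = negClosedWalks G σ) ↔
      ClosedUnderRotation 𝒲 ∧ Exclusive3WalkProperty 𝒲 := by
  constructor
  · rintro ⟨σ, rfl⟩
    constructor
    · intro v W hW u hu
      simp only [negClosedWalks, Set.mem_setOf_eq, Walk.IsNegative] at hW ⊢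
      have hperm := ((W.rotate_edges u hu).perm).countP_eq (fun e => !σ e)
      rwa [hperm]
    · intro x y W₁ W₂ W₃
      have mem_iff : ∀ Wa Wb : G.Walk x y,
          (Wa.append Wb.reverse ∈ negClosedWalks G σ x) ↔
            Odd (List.countP (fun e => !σ e) Wa.edges +
              List.countP (fun e => !σ e) Wb.edges) := by
        intro Wa Wb
        simp [negClosedWalks, Walk.IsNegative, SimpleGraph.Walk.edges_append,
          SimpleGraph.Walk.edges_reverse, List.countP_append]
      rw [NegAux.parity3, mem_iff, mem_iff, mem_iff, Nat.odd_add, Nat.odd_add, Nat.odd_add]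
      simp only [← Nat.not_odd_iff_even]
      tauto
  · rintro ⟨hR, hE⟩
    refine ⟨NegAux.sigma G 𝒲 hE, ?_⟩
    funext v
    ext C
    simp only [negClosedWalks, Set.mem_setOf_eq, Walk.IsNegative]
    have h1 := NegAux.conj hE hR (NegAux.pw G v) C
    have h2 := NegAux.main hE hR C (rfl : NegAux.rt G v = NegAux.rt G v)
    rw [show (NegAux.pw G v).copy rfl rfl = NegAux.pw G v
      from SimpleGraph.Walk.copy_rfl_rfl _] at h2
    exact h1.symm.trans h2
end

section
/- (Backward direction of Theorem 3.) Let G be a simple graph and 𝒲 a set of closed walks in G that is closed under rotation and satisfies the exclusive 3-walk property. Then there exists a signature σ on G such that 𝒲 is exactly the set of negative closed walks of (G, σ). -/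
open SimpleGraph

namespace T3
open scoped Classical

variable {V : Type*} [DecidableEq V] {G : SimpleGraph V}

private lemma parity3 {a b c : Prop} [Decidable a] [Decidable b] [Decidable c]
    (h : Even ((if a then 1 else 0) + (if b then 1 else 0) + (if c then 1 else 0) : ℕ)) :
    a ↔ ¬(b ↔ c) := by
  by_cases ha : a <;> by_cases hb : b <;> by_cases hc : c <;>
    simp [ha, hb, hc, Nat.even_iff] at h ⊢ <;> tauto

lemma takeUntil_self' {v w : V} (q : G.Walk v w) (h : v ∈ q.support) :
    q.takeUntil v h = Walk.nil := by
  cases q with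
  | nil => rfl
  | cons r q => simp [Walk.takeUntil]

lemma dropUntil_self' {v w : V} (q : G.Walk v w) (h : v ∈ q.support) :
    q.dropUntil v h = q := by
  cases q with
  | nil => rfl
  | cons r q => simp [Walk.dropUntil]

lemma rotate_cons_eq {x z : V} (e : G.Adj x z) (D : G.Walk z x)
    (hz : z ∈ (Walk.cons e D).support) :
    (Walk.cons e D).rotate z hz = D.append (Walk.cons e Walk.nil) := by
  have hxz : x ≠ z := G.ne_of_adj e
  have hzD : z ∈ D.support := Walk.start_mem_support D
  have ht : (Walk.cons e D).takeUntil z hz = Walk.cons e (D.takeUntil z hzD) := by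
    simp [Walk.takeUntil, hxz]
  have hd : (Walk.cons e D).dropUntil z hz = D.dropUntil z hzD := by
    simp [Walk.dropUntil, hxz]
  rw [Walk.rotate, ht, hd, takeUntil_self', dropUntil_self']

section
variable (𝒲 : ∀ v : V, Set (G.Walk v v))

lemma transport_edge {a b : V} (hab : a = b) {x y : V} (e : G.Adj x y)
    (A : G.Walk b x) (R : G.Walk y a) :
    A.append (Walk.cons e (R.copy rfl hab)) ∈ 𝒲 b ↔
      (A.copy hab.symm rfl).append (Walk.cons e R) ∈ 𝒲 a := by
  subst hab; simp [Walk.copy_rfl_rfl]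

lemma transport2 {a b : V} (hab : a = b) {x y : V} (A : G.Walk b x) (B : G.Walk x y)
    (R : G.Walk y a) :
    (A.copy hab.symm rfl).append (B.append R) ∈ 𝒲 a ↔
      A.append (B.append (R.copy rfl hab)) ∈ 𝒲 b := by
  subst hab; simp [Walk.copy_rfl_rfl]

variable (h3 : Exclusive3WalkProperty 𝒲)
include h3

lemma key3 {x y : V} (W₁ W₂ W₃ : G.Walk x y) :
    W₁.append W₂.reverse ∈ 𝒲 x ↔
      ¬(W₁.append W₃.reverse ∈ 𝒲 x ↔ W₂.append W₃.reverse ∈ 𝒲 x) :=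
  parity3 (h3 x y W₁ W₂ W₃)

lemma self_not_mem {x y : V} (Q : G.Walk x y) : Q.append Q.reverse ∉ 𝒲 x := by
  have h := key3 𝒲 h3 Q Q Q; tauto

lemma nil_not_mem (x : V) : (Walk.nil : G.Walk x x) ∉ 𝒲 x := by
  have h := self_not_mem 𝒲 h3 (Walk.nil : G.Walk x x)
  simpa using h

lemma mem_append_iff {x : V} (C₁ C₂ : G.Walk x x) :
    C₁.append C₂ ∈ 𝒲 x ↔ ¬(C₁ ∈ 𝒲 x ↔ C₂ ∈ 𝒲 x) := by
  have h := key3 𝒲 h3 C₁ Walk.nil C₂.reverse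
  simp only [Walk.reverse_nil, Walk.append_nil, Walk.reverse_reverse, Walk.nil_append] at h
  tauto

lemma mem_reverse_iff {x : V} (C : G.Walk x x) : C.reverse ∈ 𝒲 x ↔ C ∈ 𝒲 x := by
  have h := key3 𝒲 h3 (Walk.nil : G.Walk x x) C.reverse Walk.nil
  simp only [Walk.reverse_nil, Walk.append_nil, Walk.reverse_reverse, Walk.nil_append] at h
  have hn := nil_not_mem 𝒲 h3 x
  tauto

lemma cancel_mem_iff {x y z : V} (A : G.Walk x y) (S : G.Walk y z) (B : G.Walk y x) :
    A.append ((S.append S.reverse).append B) ∈ 𝒲 x ↔ A.append B ∈ 𝒲 x := by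
  have h := key3 𝒲 h3 A (A.append (S.append S.reverse)) B.reverse
  have e1 : A.append (A.append (S.append S.reverse)).reverse
      = (A.append S).append (A.append S).reverse := by
    simp [Walk.reverse_append, Walk.reverse_reverse, Walk.append_assoc]
  have e3 : (A.append (S.append S.reverse)).append B
      = A.append ((S.append S.reverse).append B) := (Walk.append_assoc _ _ _).symm
  rw [Walk.reverse_reverse, e3, e1] at h
  have hs := self_not_mem 𝒲 h3 (A.append S)
  tauto

lemma cons_step {a u c : V} (e : G.Adj u c) (Pu : G.Walk a u) (Pc : G.Walk a c)
    (B : G.Walk c a) :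
    Pu.append (Walk.cons e B) ∈ 𝒲 a ↔
      ¬(Pu.append (Walk.cons e Pc.reverse) ∈ 𝒲 a ↔ Pc.append B ∈ 𝒲 a) := by
  have hc := cancel_mem_iff 𝒲 h3 (Pu.append (Walk.cons e Walk.nil)) Pc.reverse B
  rw [Walk.reverse_reverse] at hc
  have e2 : (Pu.append (Walk.cons e Walk.nil)).append B = Pu.append (Walk.cons e B) := by
    rw [← Walk.append_assoc, Walk.cons_append, Walk.nil_append]
  rw [e2] at hc
  have hsplit := mem_append_iff 𝒲 h3 (Pu.append (Walk.cons e Pc.reverse)) (Pc.append B)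
  have e3 : (Pu.append (Walk.cons e Pc.reverse)).append (Pc.append B)
      = (Pu.append (Walk.cons e Walk.nil)).append ((Pc.reverse.append Pc).append B) := by
    simp [← Walk.append_assoc, Walk.cons_append, Walk.nil_append]
  rw [e3] at hsplit
  rw [← hc]
  exact hsplit

lemma sym_helper {u v a : V} (h : G.Adj u v) (Pu : G.Walk a u) (Pv : G.Walk a v) :
    Pu.append (Walk.cons h Pv.reverse) ∈ 𝒲 a ↔
      Pv.append (Walk.cons h.symm Pu.reverse) ∈ 𝒲 a := by
  rw [← mem_reverse_iff 𝒲 h3 (Pu.append (Walk.cons h Pv.reverse))]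
  have hrv : (Pu.append (Walk.cons h Pv.reverse)).reverse
      = Pv.append (Walk.cons h.symm Pu.reverse) := by
    simp [Walk.reverse_append, Walk.reverse_cons, Walk.reverse_reverse,
      ← Walk.append_assoc, Walk.cons_append, Walk.nil_append, Walk.concat_eq_append]
  rw [hrv]

variable (hrot : ClosedUnderRotation 𝒲)
include hrot

lemma rotate_step {x z : V} (e : G.Adj x z) (D : G.Walk z x)
    (h : Walk.cons e D ∈ 𝒲 x) : D.append (Walk.cons e Walk.nil) ∈ 𝒲 z := by
  have hz : z ∈ (Walk.cons e D).support := by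
    simp [Walk.support_cons]
  have h2 := hrot x _ h z hz
  rwa [rotate_cons_eq] at h2

lemma swap_mem {x z : V} (T : G.Walk x z) :
    ∀ R : G.Walk z x, T.append R ∈ 𝒲 x → R.append T ∈ 𝒲 z := by
  induction T with
  | nil => intro R h; rw [Walk.append_nil]; exact h
  | cons e T' ih =>
    intro R h
    rw [Walk.cons_append] at h
    have h2 := rotate_step 𝒲 h3 hrot _ _ h
    rw [← Walk.append_assoc] at h2
    have h4 := ih _ h2
    rwa [← Walk.append_assoc, Walk.cons_append, Walk.nil_append] at h4

lemma swap_iff {x z : V} (T : G.Walk x z) (R : G.Walk z x) :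
    T.append R ∈ 𝒲 x ↔ R.append T ∈ 𝒲 z :=
  ⟨swap_mem 𝒲 h3 hrot T R, swap_mem 𝒲 h3 hrot R T⟩

lemma conj_iff {b v : V} (Q : G.Walk b v) (C : G.Walk v v) :
    Q.append (C.append Q.reverse) ∈ 𝒲 b ↔ C ∈ 𝒲 v := by
  rw [swap_iff 𝒲 h3 hrot Q (C.append Q.reverse), ← Walk.append_assoc]
  have h := cancel_mem_iff 𝒲 h3 C Q.reverse Walk.nil
  simp only [Walk.reverse_reverse, Walk.append_nil] at h
  exact h

end

section
variable (𝒲 : ∀ v : V, Set (G.Walk v v))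

noncomputable def sigF (rep : V → V) (p : ∀ v, G.Walk (rep v) v)
    (hradj : ∀ u c, G.Adj u c → rep u = rep c) (u v : V) : Bool :=
  if h : G.Adj u v then
    !decide ((p u).append (Walk.cons h ((p v).reverse.copy rfl (hradj u v h).symm)) ∈ 𝒲 (rep u))
  else true

lemma sigF_symm (h3 : Exclusive3WalkProperty 𝒲) (rep : V → V) (p : ∀ v, G.Walk (rep v) v)
    (hradj : ∀ u c, G.Adj u c → rep u = rep c) (u v : V) :
    sigF 𝒲 rep p hradj u v = sigF 𝒲 rep p hradj v u := by
  by_cases h : G.Adj u v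
  · rw [sigF, sigF, dif_pos h, dif_pos h.symm]
    congr 1
    rw [decide_eq_decide]
    have hab : rep u = rep v := hradj u v h
    have st1 : (p u).append (Walk.cons h ((p v).reverse.copy rfl (hradj u v h).symm)) ∈ 𝒲 (rep u)
        ↔ (p u).append (Walk.cons h (((p v).copy hab.symm rfl).reverse)) ∈ 𝒲 (rep u) := by
      rw [Walk.reverse_copy]
    have st2 := sym_helper 𝒲 h3 h (p u) ((p v).copy hab.symm rfl)
    have st3 := transport_edge 𝒲 hab h.symm (p v) ((p u).reverse)
    exact st1.trans (st2.trans st3.symm)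
  · rw [sigF, sigF, dif_neg h, dif_neg (fun h' => h h'.symm)]

noncomputable def sig (h3 : Exclusive3WalkProperty 𝒲) (rep : V → V) (p : ∀ v, G.Walk (rep v) v)
    (hradj : ∀ u c, G.Adj u c → rep u = rep c) : Sym2 V → Bool :=
  Sym2.lift ⟨fun u v => sigF 𝒲 rep p hradj u v, fun u v => sigF_symm 𝒲 h3 rep p hradj u v⟩

lemma sig_eq (h3 : Exclusive3WalkProperty 𝒲) (rep : V → V) (p : ∀ v, G.Walk (rep v) v)
    (hradj : ∀ u c, G.Adj u c → rep u = rep c) {u v : V} (h : G.Adj u v) :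
    (sig 𝒲 h3 rep p hradj s(u,v) = false) ↔
      (p u).append (Walk.cons h ((p v).reverse.copy rfl (hradj u v h).symm)) ∈ 𝒲 (rep u) := by
  rw [sig, Sym2.lift_mk]
  simp only [sigF, dif_pos h]
  simp

lemma main_L (h3 : Exclusive3WalkProperty 𝒲) (rep : V → V) (p : ∀ v, G.Walk (rep v) v)
    (hradj : ∀ u c, G.Adj u c → rep u = rep c) (σ : Sym2 V → Bool)
    (hσ : ∀ {u c : V} (h : G.Adj u c),
      (σ s(u,c) = false) ↔
        (p u).append (Walk.cons h ((p c).reverse.copy rfl (hradj u c h).symm)) ∈ 𝒲 (rep u)) :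
    ∀ {u w : V} (Q : G.Walk u w) (hb : rep w = rep u),
      ((p u).append (Q.append ((p w).reverse.copy rfl hb)) ∈ 𝒲 (rep u)) ↔
        Odd (Q.edges.countP fun e => !σ e) := by
  intro u w Q
  induction Q with
  | nil =>
    intro hb
    simp only [Walk.nil_append, Walk.edges_nil, List.countP_nil]
    constructor
    · intro hm; exact absurd hm (self_not_mem 𝒲 h3 (p _))
    · intro hodd; exact absurd hodd (by decide)
  | @cons u₁ c₁ w₁ e Q' ih =>
    intro hb
    have hbc : rep u₁ = rep c₁ := hradj u₁ c₁ e
    have hb' : rep w₁ = rep c₁ := hb.trans hbc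
    have step := cons_step 𝒲 h3 e (p u₁) ((p c₁).copy hbc.symm rfl)
      (Q'.append ((p w₁).reverse.copy rfl hb))
    rw [Walk.cons_append, step]
    have comp1 : (p u₁).append (Walk.cons e (((p c₁).copy hbc.symm rfl).reverse)) ∈ 𝒲 (rep u₁)
        ↔ (σ s(u₁,c₁) = false) := by
      rw [Walk.reverse_copy]
      exact (hσ e).symm
    have comp2 : ((p c₁).copy hbc.symm rfl).append
          (Q'.append ((p w₁).reverse.copy rfl hb)) ∈ 𝒲 (rep u₁)
        ↔ Odd (Q'.edges.countP fun e => !σ e) := by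
      refine (transport2 𝒲 hbc (p c₁) Q' ((p w₁).reverse.copy rfl hb)).trans ?_
      rw [Walk.copy_copy]
      exact ih hb'
    rw [comp1, comp2]
    simp only [Walk.edges_cons, List.countP_cons]
    rcases Bool.eq_false_or_eq_true (σ s(u₁, c₁)) with hs | hs <;>
      simp [hs, Nat.odd_add_one]

end
end T3

/-- Backward direction of Theorem 3: a family closed under rotation and satisfying the
exclusive 3-walk property is the family of negative closed walks of some signature. -/
theorem exists_signature_of_closedRotation_exclusive3 {V : Type*} [DecidableEq V]
    (G : SimpleGraph V) (𝒲 : ∀ v : V, Set (G.Walk v v))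
    (hrot : ClosedUnderRotation 𝒲) (h3 : Exclusive3WalkProperty 𝒲) :
    ∃ σ : Sym2 V → Bool, 𝒲 = negClosedWalks G σ := by
  classical
  have hreach : ∀ v : V, G.Reachable (Quot.out (G.connectedComponentMk v)) v :=
    fun v => SimpleGraph.ConnectedComponent.exact (Quot.out_eq _)
  set rep : V → V := fun v => Quot.out (G.connectedComponentMk v) with hrepdef
  let p : ∀ v, G.Walk (rep v) v := fun v => (hreach v).some
  have hradj : ∀ u c, G.Adj u c → rep u = rep c := fun u c h =>
    congrArg Quot.out (SimpleGraph.ConnectedComponent.sound h.reachable)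
  refine ⟨T3.sig 𝒲 h3 rep p hradj, ?_⟩
  funext v
  ext W
  have hmain := T3.main_L 𝒲 h3 rep p hradj (T3.sig 𝒲 h3 rep p hradj)
    (fun {u c} h => T3.sig_eq 𝒲 h3 rep p hradj h) W rfl
  have hconj := T3.conj_iff 𝒲 h3 hrot (p v) W
  exact hconj.symm.trans hmain
end

section
/- Lemma 6. Let G be a simple graph with signature σ and let v₀ be a vertex of G. Suppose there exists a vertex u ≠ v₀ and a negative closed walk at u whose support contains v₀. Let 𝒲 consist of the negative closed walks of (G, σ) whose starting vertex is not v₀. Then there is no signature τ on G such that 𝒲 equals the set of negative closed walks of (G, τ). -/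
open SimpleGraph

/-- Lemma 6: if some negative closed walk at a vertex `u ≠ v₀` has `v₀` in its support,
then the family of negative closed walks whose starting vertex is not `v₀` is not the
family of negative closed walks of `(G, τ)` for any signature `τ`. -/
theorem negClosedWalks_avoid_basepoint_not_negClosedWalks {V : Type*}
    (G : SimpleGraph V) (σ : Sym2 V → Bool) (v₀ : V)
    (u : V) (hu : u ≠ v₀) (W : G.Walk u u)
    (hW : Walk.IsNegative σ W) (hv₀ : v₀ ∈ W.support) :
    ¬ ∃ τ : Sym2 V → Bool,
        (fun v : V => {W : G.Walk v v | Walk.IsNegative σ W ∧ v ≠ v₀})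
          = negClosedWalks G τ := by
  classical
  rintro ⟨τ, hτ⟩
  have hWτ : Walk.IsNegative τ W := by
    have := congrFun hτ u
    have hmem : W ∈ {W : G.Walk u u | Walk.IsNegative σ W ∧ u ≠ v₀} := ⟨hW, hu⟩
    rw [this] at hmem
    exact hmem
  have hrot : Walk.IsNegative τ (W.rotate v₀ hv₀) := by
    unfold Walk.IsNegative at hWτ ⊢
    rwa [((W.rotate_edges v₀ hv₀).perm.countP_eq _)]
  have := congrFun hτ v₀
  have hmem : W.rotate v₀ hv₀ ∈ negClosedWalks G τ v₀ := hrot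
  rw [← this] at hmem
  exact hmem.2 rfl
end

section
/- Lemma 7(iii). Let G be a simple graph and let 𝒲 be a set of closed walks in G satisfying the exclusive 3-walk property. Then for every closed walk W, one has W ∈ 𝒲 if and only if W⁻¹ ∈ 𝒲 (equivalently, σ_𝒲(W) = σ_𝒲(W⁻¹)). -/
open SimpleGraph

/-- Lemma 7(iii): if `𝒲` satisfies the exclusive 3-walk property then for any closed
walk `W`, `W ∈ 𝒲` iff `W⁻¹ ∈ 𝒲`. -/
theorem mem_iff_reverse_mem_of_exclusive3 {V : Type*} {G : SimpleGraph V}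
    (𝒲 : ∀ v : V, Set (G.Walk v v)) (h3 : Exclusive3WalkProperty 𝒲)
    {v : V} (W : G.Walk v v) :
    W ∈ 𝒲 v ↔ W.reverse ∈ 𝒲 v := by
  classical
  have hnil : (Walk.nil : G.Walk v v) ∉ 𝒲 v := by
    have h := h3 v v Walk.nil Walk.nil Walk.nil
    simp only [Walk.reverse_nil, Walk.nil_append] at h
    by_contra hmem
    simp [hmem] at h
    exact (Nat.not_even_iff_odd.2 (by decide)) h
  have h := h3 v v Walk.nil W.reverse Walk.nil
  simp only [Walk.reverse_nil, Walk.nil_append, Walk.append_nil,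
    Walk.reverse_reverse] at h
  simp only [hnil, if_false] at h
  split_ifs at h with h1 h2 h2 <;> simp_all
end

section
/- Lemma 7(iv). Let G be a simple graph and let 𝒲 be a set of closed walks in G satisfying the exclusive 3-walk property. Then for every pair of closed walks W and W′ with the same starting vertex v, σ_𝒲(WW′) = σ_𝒲(W)·σ_𝒲(W′); equivalently, the concatenation WW′ belongs to 𝒲 if and only if exactly one of W, W′ belongs to 𝒲. -/
open SimpleGraph

private lemma aux_self_rev_not_mem {V : Type*} {G : SimpleGraph V}
    (𝒲 : ∀ v : V, Set (G.Walk v v)) (h3 : Exclusive3WalkProperty 𝒲)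
    {u w : V} (W : G.Walk u w) : W.append W.reverse ∉ 𝒲 u := by
  classical
  have h := h3 u w W W W
  by_cases hm : W.append W.reverse ∈ 𝒲 u
  · simp [hm, Nat.even_iff] at h
  · exact hm

private lemma aux_rev_mem_iff {V : Type*} {G : SimpleGraph V}
    (𝒲 : ∀ v : V, Set (G.Walk v v)) (h3 : Exclusive3WalkProperty 𝒲)
    {v : V} (W : G.Walk v v) : W.reverse ∈ 𝒲 v ↔ W ∈ 𝒲 v := by
  classical
  have h := h3 v v W Walk.nil W
  have h2 := aux_self_rev_not_mem 𝒲 h3 W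
  simp only [Walk.reverse_nil, Walk.append_nil, Walk.nil_append] at h
  by_cases ha : W ∈ 𝒲 v <;> by_cases hb : W.reverse ∈ 𝒲 v <;>
    simp [ha, hb, h2, Nat.even_iff] at h ⊢

/-- Lemma 7(iv): if `𝒲` satisfies the exclusive 3-walk property, then for closed walks
`W, W'` at a common vertex `v`, the concatenation `WW'` is in `𝒲` iff exactly one of
`W`, `W'` is in `𝒲`. -/
theorem append_mem_iff_xor_of_exclusive3 {V : Type*} {G : SimpleGraph V}
    (𝒲 : ∀ v : V, Set (G.Walk v v)) (h3 : Exclusive3WalkProperty 𝒲)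
    {v : V} (W W' : G.Walk v v) :
    W.append W' ∈ 𝒲 v ↔ Xor' (W ∈ 𝒲 v) (W' ∈ 𝒲 v) := by
  classical
  have h := h3 v v W W'.reverse Walk.nil
  simp only [Walk.reverse_reverse, Walk.reverse_nil, Walk.append_nil] at h
  have hr := aux_rev_mem_iff 𝒲 h3 W'
  simp only [hr] at h
  by_cases ha : W ∈ 𝒲 v <;> by_cases hb : W' ∈ 𝒲 v <;>
    by_cases hc : W.append W' ∈ 𝒲 v <;>
    simp [ha, hb, hc, Xor', Nat.even_iff] at h ⊢
end

section
/- Lemma 8. Let G be a simple graph and let 𝒲 be a set of closed walks in G that is closed under rotation and satisfies the exclusive 3-walk property. Let W be a closed walk starting at y and let P be a walk from x to y. Then σ_𝒲(P·W·P⁻¹) = σ_𝒲(W); equivalently, the closed walk P·W·P⁻¹ at x belongs to 𝒲 if and only if W belongs to 𝒲. -/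
open SimpleGraph

section Aux

/-- Parity helper: if an even number of `a, b, c` hold and `c` fails, then `a ↔ b`. -/
private lemma even_ite3 {a b c : Prop} [Decidable a] [Decidable b] [Decidable c]
    (h : Even ((if a then 1 else 0) + (if b then 1 else 0) + (if c then 1 else 0) : ℕ))
    (hc : ¬c) : a ↔ b := by
  rw [if_neg hc] at h
  by_cases ha : a <;> by_cases hb : b
  · exact iff_of_true ha hb
  · rw [if_pos ha, if_neg hb, Nat.even_iff] at h; omega
  · rw [if_neg ha, if_pos hb, Nat.even_iff] at h; omega
  · exact iff_of_false ha hb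

/-- Parity helper: if an even number of `a, b, c` hold and `b` fails, then `a ↔ c`. -/
private lemma even_ite3_mid {a b c : Prop} [Decidable a] [Decidable b] [Decidable c]
    (h : Even ((if a then 1 else 0) + (if b then 1 else 0) + (if c then 1 else 0) : ℕ))
    (hb : ¬b) : a ↔ c := by
  rw [if_neg hb] at h
  by_cases ha : a <;> by_cases hc : c
  · exact iff_of_true ha hc
  · rw [if_pos ha, if_neg hc, Nat.even_iff] at h; omega
  · rw [if_neg ha, if_pos hc, Nat.even_iff] at h; omega
  · exact iff_of_false ha hc

variable {V : Type*} {G : SimpleGraph V}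

private lemma takeUntil_start' [DecidableEq V] {w v : V}
    (D : G.Walk w v) (h : w ∈ D.support) : D.takeUntil w h = Walk.nil := by
  cases D <;> simp [Walk.takeUntil]

private lemma dropUntil_start' [DecidableEq V] {w v : V}
    (D : G.Walk w v) (h : w ∈ D.support) : D.dropUntil w h = D := by
  cases D <;> simp [Walk.dropUntil]

variable (𝒲 : ∀ v : V, Set (G.Walk v v)) (h3 : Exclusive3WalkProperty 𝒲)

include h3

/-- For any walk `R`, the closed walk `R·R⁻¹` is not in `𝒲`. -/
private lemma self_rev_not_mem {x y : V} (R : G.Walk x y) :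
    R.append R.reverse ∉ 𝒲 x := by
  intro hm
  have h := h3 x y R R R
  rw [if_pos hm, Nat.even_iff] at h
  omega

/-- Membership in `𝒲` is invariant under reversal of closed walks. -/
private lemma rev_mem_iff {v : V} (W : G.Walk v v) :
    W.reverse ∈ 𝒲 v ↔ W ∈ 𝒲 v := by
  have h := h3 v v W Walk.nil W
  rw [Walk.reverse_nil, Walk.append_nil, Walk.nil_append] at h
  classical
  exact (even_ite3_mid h (self_rev_not_mem 𝒲 h3 W)).symm

/-- Appending a "spur" `R·R⁻¹` to a closed walk does not change membership in `𝒲`. -/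
private lemma spur_mem_iff {u z : V} (Q : G.Walk u u) (R : G.Walk u z) :
    Q.append (R.append R.reverse) ∈ 𝒲 u ↔ Q ∈ 𝒲 u := by
  have h := h3 u u Q Walk.nil (R.append R.reverse)
  rw [Walk.reverse_nil, Walk.append_nil, Walk.reverse_append, Walk.reverse_reverse,
    Walk.nil_append] at h
  classical
  exact (even_ite3 h (self_rev_not_mem 𝒲 h3 R)).symm

variable [DecidableEq V] (hrot : ClosedUnderRotation 𝒲)

include hrot

/-- One-step rotation: if `e·D ∈ 𝒲` then `D·e ∈ 𝒲`. -/
private lemma edge_rot {v w : V} (e : G.Adj v w) (D : G.Walk w v)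
    (hm : Walk.cons e D ∈ 𝒲 v) : D.append (Walk.cons e Walk.nil) ∈ 𝒲 w := by
  have hs : w ∈ (Walk.cons e D).support := by simp
  have h := hrot v _ hm w hs
  have htake : (Walk.cons e D).takeUntil w hs = Walk.cons e Walk.nil := by
    simp [Walk.takeUntil, e.ne, takeUntil_start']
  have hdrop : (Walk.cons e D).dropUntil w hs = D := by
    simp [Walk.dropUntil, e.ne, dropUntil_start']
  rwa [Walk.rotate, htake, hdrop] at h

/-- One-step rotation, as an equivalence. -/
private lemma edge_mem_iff {v w : V} (e : G.Adj v w) (D : G.Walk w v) :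
    Walk.cons e D ∈ 𝒲 v ↔ D.append (Walk.cons e Walk.nil) ∈ 𝒲 w := by
  constructor
  · exact edge_rot 𝒲 h3 hrot e D
  · intro hm
    have h1 : (D.append (Walk.cons e Walk.nil)).reverse ∈ 𝒲 w :=
      (rev_mem_iff 𝒲 h3 _).mpr hm
    simp only [Walk.reverse_append, Walk.reverse_cons, Walk.reverse_nil, Walk.nil_append,
      Walk.cons_append] at h1
    have h2 := edge_rot 𝒲 h3 hrot e.symm D.reverse h1
    have h4 : (Walk.cons e D).reverse ∈ 𝒲 v := by
      rw [Walk.reverse_cons]; exact h2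
    exact (rev_mem_iff 𝒲 h3 _).mp h4

end Aux

/-- Lemma 8: if `𝒲` is closed under rotation and satisfies the exclusive 3-walk
property, then for a closed walk `W` at `y` and an `x–y` walk `P`,
`P · W · P⁻¹ ∈ 𝒲` iff `W ∈ 𝒲`. -/
theorem conj_mem_iff_of_closedRotation_exclusive3 {V : Type*} [DecidableEq V]
    {G : SimpleGraph V} (𝒲 : ∀ v : V, Set (G.Walk v v))
    (hrot : ClosedUnderRotation 𝒲) (h3 : Exclusive3WalkProperty 𝒲)
    {x y : V} (P : G.Walk x y) (W : G.Walk y y) :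
    (P.append W).append P.reverse ∈ 𝒲 x ↔ W ∈ 𝒲 y := by
  induction P with
  | nil => rw [Walk.nil_append, Walk.reverse_nil, Walk.append_nil]
  | @cons x x₁ y e P' ih =>
    rw [Walk.cons_append, Walk.cons_append, Walk.reverse_cons,
      edge_mem_iff 𝒲 h3 hrot e]
    rw [show ((P'.append W).append (P'.reverse.append (Walk.cons e.symm Walk.nil))).append
          (Walk.cons e Walk.nil) =
        ((P'.append W).append P'.reverse).append
          ((Walk.cons e.symm Walk.nil).append (Walk.cons e.symm Walk.nil).reverse) from by
      simp only [Walk.reverse_cons, Walk.reverse_nil, Walk.nil_append, Walk.append_assoc]]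
    rw [spur_mem_iff 𝒲 h3]
    exact ih W
end
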